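/- Let p be a prime and m ∈ ℕ. There exists N = N(m) ∈ ℕ such that p^N · M^{(m)} ⊆ A^{(m)}, i.e. for every d ∈ ℕ and every 0 ≤ k ≤ 2d the element p^N·(q^(m)_d!/d!)·x^k ξ^d of ℚ_p[x,ξ] lies in A^{(m)}. -/

import Mathlib

/-!
STATEMENT 11: Let `p` be prime and `m : ℕ`. There exists `N = N(m) : ℕ` such that
`p^N · M^{(m)} ⊆ A^{(m)}`, i.e. for every `d : ℕ` and every `0 ≤ k ≤ 2d` the
element `p^N·(q^(m)_d!/d!)·x^k ξ^d` of `ℚ_[p][x,ξ]` lies in `A^{(m)}`.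

Here, in `ℚ_[p][x,ξ]` (realized as `MvPolynomial (Fin 2) ℚ_[p]` with `x = X 0`,
`ξ = X 1`), `A^{(m)}` is the `ℤ_[p]`-subalgebra generated by the elements
`(q^(m)_ν!/ν!)·ξ^ν`, `(q^(m)_ν!/ν!)·(xξ)^ν`, `(q^(m)_ν!/ν!)·(x²ξ)^ν` (`ν : ℕ`),
and `M^{(m)}` is the `ℤ_[p]`-span of the elements `(q^(m)_d!/d!)·x^k ξ^d`
(`d : ℕ`, `0 ≤ k ≤ 2d`).
-/

noncomputable section

/-- `q^(m)_n = ⌊n / p^m⌋`. -/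
def qm (p m n : ℕ) : ℕ := n / p ^ m

/-- The scalar `q^(m)_ν! / ν!` in `ℚ_[p]`. -/
def cm (p : ℕ) [Fact p.Prime] (m ν : ℕ) : ℚ_[p] :=
  ((qm p m ν).factorial : ℚ_[p]) / (ν.factorial : ℚ_[p])

/-- The generators `(q^(m)_ν!/ν!)·(x^k ξ)^ν`, `k = 0, 1, 2`, of `A^{(m)}`. -/
def genA (p : ℕ) [Fact p.Prime] (m : ℕ) (g : Fin 3 × ℕ) :
    MvPolynomial (Fin 2) ℚ_[p] :=
  cm p m g.2 • ((MvPolynomial.X 0) ^ (g.1 : ℕ) * MvPolynomial.X 1) ^ g.2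

/-- `A^{(m)}`: the `ℤ_[p]`-subalgebra of `ℚ_[p][x,ξ]` generated by the elements
`genA`, realized as all `ℤ_[p]`-linear combinations of products of generators. -/
def Aset (p : ℕ) [Fact p.Prime] (m : ℕ) : Set (MvPolynomial (Fin 2) ℚ_[p]) :=
  {u | ∃ (s : Finset (List (Fin 3 × ℕ))) (a : List (Fin 3 × ℕ) → ℤ_[p]),
    u = ∑ w ∈ s, ((a w : ℚ_[p]) • (w.map (genA p m)).prod)}

/-- The spanning elements `(q^(m)_d!/d!)·x^k ξ^d` of `M^{(m)}`. -/
def genM (p : ℕ) [Fact p.Prime] (m d k : ℕ) : MvPolynomial (Fin 2) ℚ_[p] :=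
  cm p m d • ((MvPolynomial.X 0) ^ k * (MvPolynomial.X 1) ^ d)

/-!
By Legendre's formula, `v_p(n!) - v_p(⌊n/p^m⌋!) = ∑_{i=1}^m ⌊n/p^i⌋`, so `‖q^(m)_n!/n!‖` is
`p` to that sum. Since `⌊(a+b)/p^i⌋ ≤ ⌊a/p^i⌋ + ⌊b/p^i⌋ + 1`, the scalar `q^(m)_ν!/ν!` is
multiplicative up to a factor of norm at most `p^m` per addition. Writing `d = a + b + c` and
`k = b + 2c`, the monomial `x^k ξ^d` is `ξ^a (xξ)^b (x²ξ)^c`, and comparing coefficients shows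
that `p^{2m}·(q^(m)_d!/d!)·x^k ξ^d` is a `ℤ_p`-multiple of the product of three generators.
-/

open Finset

theorem padicValNat_factorial_eq_sum_add_factorial_div_pow (p : ℕ) [Fact p.Prime] (m n : ℕ) :
    padicValNat p n.factorial =
      ∑ i ∈ range m, n / p ^ (i + 1) + padicValNat p (n / p ^ m).factorial := by
  induction m with
  | zero => simp
  | succ m ih =>
    have hstep : ∀ k, padicValNat p k.factorial = k / p + padicValNat p (k / p).factorial :=
      fun k => by rw [← padicValNat_mul_div_factorial, padicValNat_factorial_mul, add_comm]
    rw [ih, hstep, Nat.div_div_eq_div_mul, ← pow_succ, sum_range_succ, add_assoc]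

theorem sum_range_add_div_pow_le (p m a b : ℕ) :
    ∑ i ∈ range m, (a + b) / p ^ (i + 1) ≤
      ∑ i ∈ range m, a / p ^ (i + 1) + ∑ i ∈ range m, b / p ^ (i + 1) + m := by
  calc ∑ i ∈ range m, (a + b) / p ^ (i + 1)
      ≤ ∑ i ∈ range m, (a / p ^ (i + 1) + b / p ^ (i + 1) + 1) :=
        sum_le_sum fun i _ => Nat.add_div_le_div_add_div_add_one _ _ _
    _ = _ := by simp [sum_add_distrib]

variable {p : ℕ} [Fact p.Prime]

theorem Padic.norm_natCast_eq_zpow_neg_padicValNat {n : ℕ} (hn : n ≠ 0) :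
    ‖(n : ℚ_[p])‖ = (p : ℝ) ^ (-(padicValNat p n : ℤ)) := by
  rw [Padic.norm_eq_zpow_neg_valuation (by exact_mod_cast hn), Padic.valuation_natCast]

theorem cm_ne_zero (m n : ℕ) : cm p m n ≠ 0 :=
  div_ne_zero (Nat.cast_ne_zero.mpr (Nat.factorial_ne_zero _))
    (Nat.cast_ne_zero.mpr (Nat.factorial_ne_zero _))

theorem norm_cm (m n : ℕ) : ‖cm p m n‖ = (p : ℝ) ^ (∑ i ∈ range m, n / p ^ (i + 1)) := by
  have hp : (p : ℝ) ≠ 0 := by exact_mod_cast (Fact.out : p.Prime).ne_zero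
  rw [cm, norm_div, Padic.norm_natCast_eq_zpow_neg_padicValNat (Nat.factorial_ne_zero _),
    Padic.norm_natCast_eq_zpow_neg_padicValNat (Nat.factorial_ne_zero _), ← zpow_sub₀ hp,
    padicValNat_factorial_eq_sum_add_factorial_div_pow p m n, qm, ← zpow_natCast]
  push_cast
  ring_nf

theorem norm_cm_add_le (m a b : ℕ) :
    ‖cm p m (a + b)‖ ≤ (p : ℝ) ^ m * ‖cm p m a‖ * ‖cm p m b‖ := by
  have hp : (1 : ℝ) ≤ p := by exact_mod_cast (Fact.out : p.Prime).one_lt.le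
  rw [norm_cm, norm_cm, norm_cm, ← pow_add, ← pow_add]
  exact pow_le_pow_right₀ hp (by linarith [sum_range_add_div_pow_le p m a b])

theorem norm_cm_add_add_le (m a b c : ℕ) :
    ‖cm p m (a + b + c)‖ ≤ (p : ℝ) ^ (2 * m) * (‖cm p m a‖ * ‖cm p m b‖ * ‖cm p m c‖) := by
  calc ‖cm p m (a + b + c)‖ ≤ (p : ℝ) ^ m * ‖cm p m (a + b)‖ * ‖cm p m c‖ := norm_cm_add_le m _ _
    _ ≤ (p : ℝ) ^ m * ((p : ℝ) ^ m * ‖cm p m a‖ * ‖cm p m b‖) * ‖cm p m c‖ := by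
        gcongr; exact norm_cm_add_le m a b
    _ = _ := by ring

theorem smul_prod_genA_mem_Aset (m : ℕ) (z : ℤ_[p]) (w : List (Fin 3 × ℕ)) :
    (z : ℚ_[p]) • (w.map (genA p m)).prod ∈ Aset p m :=
  ⟨{w}, fun _ => z, by rw [sum_singleton]⟩

theorem cm_smul_genA_mul_genA_mul_genA (m a b c : ℕ) :
    cm p m (a + b + c) • (genA p m (0, a) * genA p m (1, b) * genA p m (2, c)) =
      (cm p m a * cm p m b * cm p m c) • genM p m (a + b + c) (b + 2 * c) := by
  simp only [genA, genM, smul_mul_smul_comm, smul_smul]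
  rw [mul_comm (cm p m (a + b + c))]
  congr 1
  simp only [Fin.val_zero, Fin.val_one, Fin.val_two]
  ring

theorem pow_smul_genM_add_add_mem_Aset (m a b c : ℕ) :
    (p : ℚ_[p]) ^ (2 * m) • genM p m (a + b + c) (b + 2 * c) ∈ Aset p m := by
  set C := cm p m a * cm p m b * cm p m c
  have hC : C ≠ 0 := mul_ne_zero (mul_ne_zero (cm_ne_zero m a) (cm_ne_zero m b)) (cm_ne_zero m c)
  set z : ℚ_[p] := (p : ℚ_[p]) ^ (2 * m) * cm p m (a + b + c) / C
  have hz : ‖z‖ ≤ 1 := by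
    have hp : (0 : ℝ) < (p : ℝ) ^ (2 * m) := pow_pos (by exact_mod_cast (Fact.out : p.Prime).pos) _
    rw [norm_div, norm_mul, Padic.norm_p_pow, zpow_neg, zpow_natCast,
      div_le_one (norm_pos_iff.mpr hC), inv_mul_le_iff₀ hp]
    simpa [C] using norm_cm_add_add_le m a b c
  have hsmul : (p : ℚ_[p]) ^ (2 * m) • genM p m (a + b + c) (b + 2 * c) =
      z • (genA p m (0, a) * genA p m (1, b) * genA p m (2, c)) := by
    rw [show z = (p : ℚ_[p]) ^ (2 * m) / C * cm p m (a + b + c) by ring, ← smul_smul,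
      cm_smul_genA_mul_genA_mul_genA, smul_smul, div_mul_cancel₀ _ hC]
  rw [hsmul]
  simpa [mul_assoc] using smul_prod_genA_mem_Aset m ⟨z, hz⟩ [(0, a), (1, b), (2, c)]

theorem pow_p_mul_Mset_subset_Aset (p : ℕ) [Fact p.Prime] (m : ℕ) :
    ∃ N : ℕ, ∀ d k : ℕ, k ≤ 2 * d →
      ((p : ℚ_[p]) ^ N • genM p m d k) ∈ Aset p m := by
  refine ⟨2 * m, fun d k hk => ?_⟩
  obtain ⟨a, b, c, rfl, rfl⟩ : ∃ a b c : ℕ, a + b + c = d ∧ b + 2 * c = k := by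
    rcases le_or_gt k d with h | h
    · exact ⟨d - k, k, 0, by omega, by omega⟩
    · exact ⟨0, 2 * d - k, k - d, by omega, by omega⟩
  exact pow_smul_genM_add_add_mem_Aset m a b c

end
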